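/- arXiv:2601.22437 — 7 statements merged into one kernel-verified Lean document; each statement's English description precedes it below -/
import Mathlib

section
/- Let m ≥ 2 and let λ_1, …, λ_m be distinct real numbers. Define P(x) = ∏_{k=1}^m (x − λ_k). Then for every index i ∈ {1, …, m}, one has ∑_{k ≠ i} 1/(P'(λ_k)·(λ_i − λ_k)) = −(1/2)·P''(λ_i)/P'(λ_i)². -/
open Polynomial Finset

/-- Partial-fraction identity: for distinct reals `λ₁, …, λ_m` and
`P(x) = ∏ (x − λ_k)`, one has
`∑_{k ≠ i} 1/(P'(λ_k)(λ_i − λ_k)) = −(1/2) P''(λ_i)/P'(λ_i)²`. -/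
theorem stmt0 (m : ℕ) (hm : 2 ≤ m) (lam : Fin m → ℝ) (hlam : Function.Injective lam)
    (P : Polynomial ℝ) (hP : P = ∏ k, (X - C (lam k))) (i : Fin m) :
    ∑ k ∈ Finset.univ.filter (fun k => k ≠ i),
        1 / (P.derivative.eval (lam k) * (lam i - lam k))
      = -(1 / 2) * (P.derivative.derivative.eval (lam i) / (P.derivative.eval (lam i)) ^ 2) := by
  classical
  have hinj : Set.InjOn lam ↑(Finset.univ : Finset (Fin m)) := hlam.injOn
  have hPn : P = Lagrange.nodal Finset.univ lam := by rw [hP, Lagrange.nodal_eq]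
  set d : Fin m → ℝ := fun k => ∏ j ∈ Finset.univ.erase k, (lam k - lam j) with hd
  have hd0 : ∀ k, d k ≠ 0 := by
    intro k
    refine prod_ne_zero_iff.2 fun j hj => sub_ne_zero.2 fun h => ?_
    exact (mem_erase.1 hj).1 (hlam h.symm)
  -- P'(λ_k) = d k
  have hP' : ∀ k, P.derivative.eval (lam k) = d k := by
    intro k
    rw [hPn, Lagrange.eval_nodal_derivative_eval_node_eq (mem_univ k), Lagrange.eval_nodal]
  -- nodal weight = (d k)⁻¹
  have hw : ∀ k, Lagrange.nodalWeight Finset.univ lam k = (d k)⁻¹ := by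
    intro k
    rw [Lagrange.nodalWeight, hd, prod_inv_distrib]
  -- basis in product form
  have hbasis : ∀ k, Lagrange.basis Finset.univ lam k
      = C (d k)⁻¹ * Lagrange.nodal (Finset.univ.erase k) lam := by
    intro k
    rw [Lagrange.basis_eq_prod_sub_inv_mul_nodal_div (mem_univ k), hw,
      ← Lagrange.nodal_erase_eq_nodal_div (mem_univ k)]
  -- the residual sum S
  set S : Polynomial ℝ := ∑ k ∈ Finset.univ.erase i,
      C (d k)⁻¹ * Lagrange.nodal ((Finset.univ.erase k).erase i) lam with hS
  -- key polynomial identity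
  have key : C (d i)⁻¹ * Lagrange.nodal (Finset.univ.erase i) lam
      = 1 - (X - C (lam i)) * S := by
    have hsum := Lagrange.sum_basis hinj ⟨i, mem_univ i⟩
    rw [← add_sum_erase _ _ (mem_univ i)] at hsum
    rw [← hbasis i, eq_sub_iff_add_eq, ← hsum]
    congr 1
    rw [mul_sum]
    refine sum_congr rfl fun k hk => ?_
    have hik : i ∈ Finset.univ.erase k :=
      mem_erase.2 ⟨fun h => (mem_erase.1 hk).1 h.symm, mem_univ i⟩
    rw [hbasis k, Lagrange.nodal_eq_mul_nodal_erase hik]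
    ring
  -- differentiate and evaluate at lam i
  set D : ℝ := (derivative (Lagrange.nodal (Finset.univ.erase i) lam)).eval (lam i) with hD
  have key2 : (d i)⁻¹ * D = - S.eval (lam i) := by
    have := congrArg (fun p => (derivative p).eval (lam i)) key
    simpa [derivative_mul, derivative_sub, eval_mul, eval_sub] using this
  -- evaluate S
  have hSval : S.eval (lam i)
      = ∑ k ∈ Finset.univ.erase i, (d k)⁻¹ *
          ∏ j ∈ (Finset.univ.erase k).erase i, (lam i - lam j) := by
    rw [hS, eval_finset_sum]
    exact sum_congr rfl fun k hk => by rw [eval_mul, eval_C, Lagrange.eval_nodal]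
  -- d i factors
  have hfac : ∀ k ∈ Finset.univ.erase i,
      d i = (lam i - lam k) * ∏ j ∈ (Finset.univ.erase k).erase i, (lam i - lam j) := by
    intro k hk
    have hdi' : d i = ∏ j ∈ Finset.univ.erase i, (lam i - lam j) := rfl
    rw [hdi', ← Finset.mul_prod_erase _ _ hk, Finset.erase_right_comm]
  have hik0 : ∀ k ∈ Finset.univ.erase i, lam i - lam k ≠ 0 := by
    intro k hk
    exact sub_ne_zero.2 fun h => (mem_erase.1 hk).1 (hlam h.symm)
  -- second derivative
  have hP'' : P.derivative.derivative.eval (lam i) = 2 * D := by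
    have hPi : P = (X - C (lam i)) * Lagrange.nodal (Finset.univ.erase i) lam := by
      rw [hPn]; exact Lagrange.nodal_eq_mul_nodal_erase (mem_univ i)
    rw [hPi]
    simp [derivative_mul, eval_mul, eval_add]
    ring
  -- finish
  rw [Finset.filter_ne']
  have hdi := hd0 i
  calc ∑ k ∈ Finset.univ.erase i, 1 / (P.derivative.eval (lam k) * (lam i - lam k))
      = (d i)⁻¹ * S.eval (lam i) := by
        rw [hSval, mul_sum]
        refine sum_congr rfl fun k hk => ?_
        have h1 := hfac k hk
        have h2 := hik0 k hk
        have he : (∏ j ∈ (Finset.univ.erase k).erase i, (lam i - lam j)) ≠ 0 := by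
          intro h
          exact hdi (by rw [h1, h, mul_zero])
        rw [hP' k, h1]
        set e := ∏ j ∈ (Finset.univ.erase k).erase i, (lam i - lam j) with he'
        rw [one_div, mul_inv, mul_inv]
        have h3 : (lam i - lam k)⁻¹ * e⁻¹ * ((d k)⁻¹ * e)
            = (d k)⁻¹ * (lam i - lam k)⁻¹ * (e⁻¹ * e) := by ring
        rw [h3, inv_mul_cancel₀ he, mul_one]
    _ = -(1 / 2) * (P.derivative.derivative.eval (lam i) / (P.derivative.eval (lam i)) ^ 2) := by
        have : S.eval (lam i) = -((d i)⁻¹ * D) := by rw [key2]; ring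
        rw [this, hP'', hP' i]
        field_simp
end

section
/- Let m ≥ 0 and let x_1, …, x_m be real numbers with ∑_{i=1}^m x_i > −1 and x_i ≤ 1 for every i. Then (1 + ∑_{i=1}^m x_i)·∏_{i=1}^m (1 − x_i) ≤ 1, with equality if and only if x_i = 0 for all i. -/
open Finset

/-- AM-GM with equality case: if nonnegative reals on a finset sum to the
cardinality, their product is at most `1`, with equality iff all are `1`. -/
lemma amgm_aux {ι : Type*} [DecidableEq ι] :
    ∀ (n : ℕ) (s : Finset ι) (f : ι → ℝ), s.card = n → (∀ i ∈ s, 0 ≤ f i) →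
    (∑ i ∈ s, f i = (s.card : ℝ)) →
    ∏ i ∈ s, f i ≤ 1 ∧ (∏ i ∈ s, f i = 1 ↔ ∀ i ∈ s, f i = 1) := by
  intro n
  induction n with
  | zero =>
    intro s f hc _ _
    rw [Finset.card_eq_zero] at hc; subst hc; simp
  | succ n ih =>
    intro s f hc hnn hsum
    by_cases hall : ∀ i ∈ s, f i = 1
    · exact ⟨le_of_eq (Finset.prod_eq_one hall),
        ⟨fun _ => hall, fun h => Finset.prod_eq_one h⟩⟩
    · push_neg at hall
      obtain ⟨k, hk, hk1⟩ := hall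
      -- there is some i ∈ s with f i < 1
      have hi : ∃ i ∈ s, f i < 1 := by
        by_contra h
        push_neg at h
        have h1 : ∑ i ∈ s, (1 : ℝ) < ∑ i ∈ s, f i := by
          apply Finset.sum_lt_sum h
          exact ⟨k, hk, lt_of_le_of_ne (h k hk) (Ne.symm hk1)⟩
        rw [Finset.sum_const, nsmul_eq_mul, mul_one] at h1
        linarith [hsum]
      obtain ⟨i, hi, hfi⟩ := hi
      -- there is some j ∈ s.erase i with 1 < f j
      have hsume : ∑ x ∈ s.erase i, f x = (s.card : ℝ) - f i := by
        have := Finset.sum_erase_add s f hi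
        linarith [hsum, this]
      have hj : ∃ j ∈ s.erase i, (1 : ℝ) < f j := by
        have h1 : ∑ x ∈ s.erase i, (1 : ℝ) < ∑ x ∈ s.erase i, f x := by
          rw [Finset.sum_const, nsmul_eq_mul, mul_one, hsume,
            Finset.card_erase_of_mem hi, hc]
          push_cast
          linarith
        obtain ⟨j, hj, hj1⟩ := Finset.exists_lt_of_sum_lt h1
        exact ⟨j, hj, hj1⟩
      obtain ⟨j, hj, hfj⟩ := hj
      have hjs : j ∈ s := Finset.mem_of_mem_erase hj
      have hji : j ≠ i := Finset.ne_of_mem_erase hj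
      set t : Finset ι := (s.erase i).erase j with ht
      have hts : ∀ x ∈ t, x ∈ s := fun x hx =>
        Finset.mem_of_mem_erase (Finset.mem_of_mem_erase hx)
      set P : ℝ := ∏ x ∈ t, f x with hP
      have hPnn : 0 ≤ P := Finset.prod_nonneg fun x hx => hnn x (hts x hx)
      have hsumt : f i + f j + ∑ x ∈ t, f x = (s.card : ℝ) := by
        have := Finset.sum_erase_add (s.erase i) f hj
        linarith [hsume]
      -- apply IH to s.erase i with f updated at j
      set g : ι → ℝ := Function.update f j (f i + f j - 1) with hg
      have hcard : (s.erase i).card = n := by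
        rw [Finset.card_erase_of_mem hi, hc]; omega
      have hgnn : ∀ x ∈ s.erase i, 0 ≤ g x := by
        intro x hx
        rcases eq_or_ne x j with rfl | hxj
        · rw [hg, Function.update_self]
          have h1 := hnn x (Finset.mem_of_mem_erase hx)
          have h2 := hnn i hi
          linarith
        · rw [hg, Function.update_of_ne hxj]
          exact hnn x (Finset.mem_of_mem_erase hx)
      have hgsum : ∑ x ∈ s.erase i, g x = ((s.erase i).card : ℝ) := by
        rw [hg, Finset.sum_update_of_mem hj, ← Finset.erase_eq, hcard]
        have hteq : ∑ x ∈ t, f x = (s.card : ℝ) - f i - f j := by linarith [hsumt]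
        rw [hteq, hc]
        push_cast
        ring
      obtain ⟨hle1, _⟩ := ih (s.erase i) g hcard hgnn hgsum
      have hprodg : ∏ x ∈ s.erase i, g x = (f i + f j - 1) * P := by
        rw [hg, Finset.prod_update_of_mem hj, ← Finset.erase_eq]
      have hkey : (f i + f j - 1) * P ≤ 1 := by rw [← hprodg]; exact hle1
      have hprods : ∏ x ∈ s, f x = f i * (f j * P) := by
        rw [← Finset.mul_prod_erase s f hi, ← Finset.mul_prod_erase (s.erase i) f hj]
      have hfifj : f i * f j < f i + f j - 1 := by nlinarith
      have hlt : ∏ x ∈ s, f x < 1 := by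
        rcases eq_or_lt_of_le hPnn with hP0 | hP0
        · rw [hprods, ← hP0]; norm_num
        · rw [hprods]
          calc f i * (f j * P) = (f i * f j) * P := by ring
            _ < (f i + f j - 1) * P := by
                exact mul_lt_mul_of_pos_right hfifj hP0
            _ ≤ 1 := hkey
      refine ⟨le_of_lt hlt, ?_, ?_⟩
      · intro h; exact absurd h (ne_of_lt hlt)
      · intro h; exact absurd (h i hi) (by linarith)

/-- If `∑ x_i > −1` and `x_i ≤ 1` for each `i`, then
`(1 + ∑ x_i) ∏ (1 − x_i) ≤ 1`, with equality iff all `x_i = 0`. -/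
theorem stmt6 (m : ℕ) (x : Fin m → ℝ) (hsum : -1 < ∑ i, x i) (hle : ∀ i, x i ≤ 1) :
    (1 + ∑ i, x i) * ∏ i, (1 - x i) ≤ 1 ∧
      ((1 + ∑ i, x i) * ∏ i, (1 - x i) = 1 ↔ ∀ i, x i = 0) := by
  set S : ℝ := ∑ i, x i with hS
  set f : Fin (m + 1) → ℝ := Fin.cons (1 + S) (fun i => 1 - x i) with hf
  have hprod : ∏ i, f i = (1 + S) * ∏ i, (1 - x i) := by
    rw [hf, Fin.prod_cons]
  have hnn : ∀ i ∈ (univ : Finset (Fin (m + 1))), 0 ≤ f i := by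
    intro i _
    refine Fin.cases ?_ ?_ i
    · rw [hf, Fin.cons_zero]; linarith
    · intro k; rw [hf, Fin.cons_succ]; linarith [hle k]
  have hsumf : ∑ i, f i = ((univ : Finset (Fin (m + 1))).card : ℝ) := by
    rw [hf, Fin.sum_cons]
    have : ∑ i, (1 - x i) = (m : ℝ) - S := by
      rw [Finset.sum_sub_distrib, Finset.sum_const, Finset.card_univ]
      simp [hS]
    rw [this, Finset.card_univ]
    simp
    ring
  obtain ⟨h1, h2⟩ := amgm_aux (m + 1) univ f (by simp) hnn hsumf
  rw [hprod] at h1 h2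
  refine ⟨h1, ?_⟩
  rw [h2]
  constructor
  · intro h i
    have := h i.succ (Finset.mem_univ _)
    rw [hf, Fin.cons_succ] at this
    linarith
  · intro h i _
    have hS0 : S = 0 := by rw [hS]; exact Finset.sum_eq_zero fun i _ => h i
    refine Fin.cases ?_ ?_ i
    · rw [hf, Fin.cons_zero, hS0]; norm_num
    · intro k; rw [hf, Fin.cons_succ, h k]; norm_num
end

section
/- Let m ≥ 2 and let b_1, …, b_m be distinct nonzero real numbers with ∑_{i=1}^m b_i > 0. Let b_{i₀} = max_i b_i. Then (∑_{i=1}^m b_i) · ∏_{k≠i₀} (b_{i₀} − b_k) < b_{i₀}^m. -/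
open Finset

/-- Strict AM–GM: if positive reals on a finset are not all equal and their sum is
`card * A`, then their product is strictly less than `A ^ card`. -/
lemma strict_amgm {ι : Type*} (t : Finset ι) (x : ι → ℝ) (hx : ∀ i ∈ t, 0 < x i)
    (A : ℝ) (hA : ∑ i ∈ t, x i = t.card * A)
    (hnc : ∃ j ∈ t, ∃ k ∈ t, x j ≠ x k) :
    ∏ i ∈ t, x i < A ^ t.card := by
  classical
  obtain ⟨j, hj, k, hk, hjk⟩ := hnc
  have hcard : 0 < (t.card : ℝ) := by
    have : 0 < t.card := Finset.card_pos.mpr ⟨j, hj⟩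
    exact_mod_cast this
  have hApos : 0 < A := by
    have hs : 0 < ∑ i ∈ t, x i := Finset.sum_pos hx ⟨j, hj⟩
    rw [hA] at hs
    nlinarith
  have hjensen := strictConcaveOn_log_Ioi.lt_map_sum (t := t)
    (w := fun _ => ((t.card : ℝ))⁻¹) (p := x)
    (fun i _ => inv_pos.mpr hcard)
    (by simp [Finset.sum_const]; field_simp)
    (fun i hi => hx i hi) ⟨j, hj, k, hk, hjk⟩
  simp only [smul_eq_mul] at hjensen
  have h1 : ∑ i ∈ t, ((t.card : ℝ))⁻¹ * Real.log (x i)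
      = ((t.card : ℝ))⁻¹ * Real.log (∏ i ∈ t, x i) := by
    rw [← Finset.mul_sum, Real.log_prod (fun i hi => (hx i hi).ne')]
  have h2 : ∑ i ∈ t, ((t.card : ℝ))⁻¹ * x i = A := by
    rw [← Finset.mul_sum, hA]
    field_simp
  rw [h1, h2] at hjensen
  have hlog : Real.log (∏ i ∈ t, x i) < Real.log (A ^ t.card) := by
    rw [Real.log_pow]
    have := (mul_lt_mul_iff_right₀ hcard).mpr hjensen
    rw [← mul_assoc, mul_inv_cancel₀ hcard.ne', one_mul] at this
    exact this
  have hprodpos : 0 < ∏ i ∈ t, x i := Finset.prod_pos hx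
  exact (Real.log_lt_log_iff hprodpos (by positivity)).mp hlog

/-- Key estimate in the Tang–Wei–Yan inequality: for `m ≥ 2` distinct nonzero reals
with positive sum and maximum `b_{i₀}`,
`(∑ b_i) ∏_{k≠i₀} (b_{i₀} − b_k) < b_{i₀}^m`. -/
theorem stmt7 (m : ℕ) (hm : 2 ≤ m) (b : Fin m → ℝ) (hb : Function.Injective b)
    (hne : ∀ i, b i ≠ 0) (hsum : 0 < ∑ i, b i)
    (i₀ : Fin m) (hmax : ∀ i, b i ≤ b i₀) :
    (∑ i, b i) * ∏ k ∈ Finset.univ.filter (fun k => k ≠ i₀), (b i₀ - b k) < b i₀ ^ m := by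
  classical
  set S := ∑ i, b i with hS
  -- the auxiliary family: `S` at `i₀`, `b i₀ - b i` elsewhere
  set x : Fin m → ℝ := fun i => if i = i₀ then S else b i₀ - b i with hxdef
  have hb0 : 0 < b i₀ := by
    by_contra h
    push_neg at h
    have : S ≤ 0 := Finset.sum_nonpos (fun i _ => (hmax i).trans h)
    linarith
  have hxpos : ∀ i ∈ (Finset.univ : Finset (Fin m)), 0 < x i := by
    intro i _
    by_cases hi : i = i₀
    · simp [hxdef, hi, hsum]
    · have hlt : b i < b i₀ := lt_of_le_of_ne (hmax i) (fun h => hi (hb h))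
      simp [hxdef, hi]
      linarith
  have hfilter : Finset.univ.filter (fun k => k ≠ i₀) = Finset.univ.erase i₀ := by
    ext k; simp [Finset.mem_erase, and_comm]
  -- sum of x is m * b i₀
  have hxsum : ∑ i, x i = (Finset.univ : Finset (Fin m)).card * b i₀ := by
    have h1 : ∑ i, x i = x i₀ + ∑ i ∈ Finset.univ.erase i₀, x i :=
      (Finset.add_sum_erase _ x (Finset.mem_univ i₀)).symm
    have h2 : ∑ i ∈ Finset.univ.erase i₀, x i
        = ∑ i ∈ Finset.univ.erase i₀, (b i₀ - b i) := by
      apply Finset.sum_congr rfl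
      intro i hi
      have : i ≠ i₀ := (Finset.mem_erase.mp hi).1
      simp [hxdef, this]
    have h3 : ∑ i ∈ Finset.univ.erase i₀, (b i₀ - b i)
        = ∑ i, (b i₀ - b i) :=
      Finset.sum_erase _ (by ring)
    have h4 : ∑ i : Fin m, (b i₀ - b i)
        = (Finset.univ : Finset (Fin m)).card * b i₀ - S := by
      rw [Finset.sum_sub_distrib, Finset.sum_const, nsmul_eq_mul, hS]
    have hx0 : x i₀ = S := by simp [hxdef]
    rw [h1, h2, h3, h4, hx0]; ring
  -- product of x is the LHS
  have hxprod : ∏ i, x i = S * ∏ k ∈ Finset.univ.filter (fun k => k ≠ i₀), (b i₀ - b k) := by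
    have h1 : ∏ i, x i = x i₀ * ∏ i ∈ Finset.univ.erase i₀, x i :=
      (Finset.mul_prod_erase _ x (Finset.mem_univ i₀)).symm
    have h2 : ∏ i ∈ Finset.univ.erase i₀, x i
        = ∏ i ∈ Finset.univ.erase i₀, (b i₀ - b i) := by
      apply Finset.prod_congr rfl
      intro i hi
      have : i ≠ i₀ := (Finset.mem_erase.mp hi).1
      simp [hxdef, this]
    have hx0 : x i₀ = S := by simp [hxdef]
    rw [h1, h2, hx0, hfilter]
  -- nonconstancy
  have hnc : ∃ j ∈ (Finset.univ : Finset (Fin m)), ∃ k ∈ (Finset.univ : Finset (Fin m)),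
      x j ≠ x k := by
    by_cases hcard : 1 < (Finset.univ.erase i₀).card
    · obtain ⟨j, hj, k, hk, hjk⟩ := Finset.one_lt_card.mp hcard
      refine ⟨j, Finset.mem_univ j, k, Finset.mem_univ k, ?_⟩
      have hj' : j ≠ i₀ := (Finset.mem_erase.mp hj).1
      have hk' : k ≠ i₀ := (Finset.mem_erase.mp hk).1
      simp only [hxdef]
      rw [if_neg hj', if_neg hk']
      intro h
      exact hjk (hb (by linarith))
    · -- then m = 2 and the erase set is a singleton {k}
      have hc1 : (Finset.univ.erase i₀).card = m - 1 := by
        rw [Finset.card_erase_of_mem (Finset.mem_univ i₀), Finset.card_univ, Fintype.card_fin]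
      have hm2 : m = 2 := by omega
      have hcard1 : (Finset.univ.erase i₀).card = 1 := by omega
      obtain ⟨k, hk⟩ := Finset.card_eq_one.mp hcard1
      have hkmem : k ∈ Finset.univ.erase i₀ := by rw [hk]; exact Finset.mem_singleton_self k
      have hki : k ≠ i₀ := (Finset.mem_erase.mp hkmem).1
      have hSval : S = b i₀ + b k := by
        have := (Finset.add_sum_erase _ b (Finset.mem_univ i₀)).symm
        rw [hS, this, hk, Finset.sum_singleton]
      refine ⟨k, Finset.mem_univ k, i₀, Finset.mem_univ i₀, ?_⟩
      simp only [hxdef]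
      simp only [if_true]
      rw [if_neg hki]
      
      intro h
      rw [hSval] at h
      exact hne k (by linarith)
  have := strict_amgm Finset.univ x hxpos (b i₀) hxsum hnc
  rw [hxprod] at this
  simpa [Finset.card_univ] using this
end

section
/- Let E be a real normed vector space, U ⊆ E an open set, n ≥ 1, and λ_1, …, λ_n : U → ℝ differentiable functions such that for every x ∈ U the values λ_1(x), …, λ_n(x) are pairwise distinct. Suppose that for each k ∈ {1, …, n−1} the function x ↦ e_k(λ_1(x), …, λ_n(x)) is constant on U, where e_k is the k-th elementary symmetric polynomial. Then for every i and every x ∈ U, the Fréchet derivative satisfies D(λ_i)(x) = ((−1)^{n+1} / ∏_{k≠i} (λ_i(x) − λ_k(x))) · D(σ_n)(x), where σ_n(x) = ∏_{j=1}^n λ_j(x). -/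
open Finset

private theorem myexp (n : ℕ) (t : ℝ) (a : Fin n → ℝ) :
    ∏ j, (t - a j) =
      ∑ k ∈ range (n + 1), (-1 : ℝ) ^ k * t ^ (n - k) *
        ∑ S ∈ (univ : Finset (Fin n)).powersetCard k, ∏ j ∈ S, a j := by
  have h1 : ∏ j, (t - a j) = ∏ j : Fin n, ((-a j) + t) := by
    refine Finset.prod_congr rfl fun j _ => by ring
  rw [h1, Finset.prod_add, Finset.sum_powerset,
    Finset.card_univ, Fintype.card_fin]
  refine Finset.sum_congr rfl fun k hk => ?_
  rw [Finset.mul_sum]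
  refine Finset.sum_congr rfl fun S hS => ?_
  obtain ⟨hSsub, hScard⟩ := Finset.mem_powersetCard.mp hS
  have hc : (univ \ S).card = n - k := by
    rw [Finset.card_sdiff_of_subset (Finset.subset_univ S), hScard, Finset.card_univ, Fintype.card_fin]
  have hneg : ∏ i ∈ S, (-a i) = (-1 : ℝ) ^ k * ∏ i ∈ S, a i := by
    rw [← hScard]
    calc ∏ i ∈ S, (-a i) = ∏ i ∈ S, ((-1 : ℝ) * a i) := by
          exact Finset.prod_congr rfl fun i _ => by ring
      _ = (-1 : ℝ) ^ S.card * ∏ i ∈ S, a i := by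
          rw [Finset.prod_mul_distrib, Finset.prod_const]
  rw [Finset.prod_const, hc, hneg]
  ring

/-- If `λ₁, …, λ_n : U → ℝ` are differentiable with pairwise distinct values, and the
elementary symmetric functions `e_k(λ₁, …, λ_n)` are constant on `U` for `k = 1, …, n−1`,
then `D(λ_i)(x) = ((−1)^{n+1} / ∏_{k≠i}(λ_i(x) − λ_k(x))) · D(σ_n)(x)`,
where `σ_n = ∏ λ_j`. -/
theorem stmt10 {E : Type*} [NormedAddCommGroup E] [NormedSpace ℝ E]
    (U : Set E) (hU : IsOpen U) (n : ℕ) (hn : 1 ≤ n)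
    (lam : Fin n → E → ℝ)
    (hdiff : ∀ i, ∀ x ∈ U, DifferentiableAt ℝ (lam i) x)
    (hdist : ∀ x ∈ U, Function.Injective (fun i => lam i x))
    (hconst : ∀ k : ℕ, 1 ≤ k → k ≤ n - 1 → ∀ x ∈ U, ∀ y ∈ U,
      (∑ s ∈ Finset.univ.powersetCard k, ∏ j ∈ s, lam j x) =
      (∑ s ∈ Finset.univ.powersetCard k, ∏ j ∈ s, lam j y)) :
    ∀ i : Fin n, ∀ x ∈ U,
      fderiv ℝ (lam i) x =
        ((-1 : ℝ) ^ (n + 1) / ∏ k ∈ Finset.univ.filter (fun k => k ≠ i), (lam i x - lam k x)) •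
          fderiv ℝ (fun y => ∏ j, lam j y) x := by
  classical
  intro i x hx
  set t : ℝ := lam i x with ht
  set c : ℝ := ∏ k ∈ (univ : Finset (Fin n)).erase i, (t - lam k x) with hc
  have hfilter : (univ : Finset (Fin n)).filter (fun k => k ≠ i) = univ.erase i := by
    ext k; simp [Finset.mem_erase, and_comm]
  have hcne : c ≠ 0 := by
    rw [hc]
    refine Finset.prod_ne_zero_iff.mpr fun k hk => ?_
    have hki : k ≠ i := (Finset.mem_erase.mp hk).1
    exact sub_ne_zero_of_ne fun h => hki (hdist x hx h.symm)
  set Dσ := fderiv ℝ (fun y => ∏ j, lam j y) x with hDσ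
  have hσ' : HasFDerivAt (fun y => ∏ j, lam j y)
      (∑ j, (∏ m ∈ univ.erase j, lam m x) • fderiv ℝ (lam j) x) x :=
    HasFDerivAt.finset_prod fun j _ => (hdiff j x hx).hasFDerivAt
  have hσ : HasFDerivAt (fun y => ∏ j, lam j y) Dσ x :=
    hσ'.differentiableAt.hasFDerivAt
  -- derivative of g(y) = ∏ (t - lam j y)
  have hgder : HasFDerivAt (fun y => ∏ j, (t - lam j y))
      (∑ j, (∏ m ∈ univ.erase j, (t - lam m x)) • ((0 : E →L[ℝ] ℝ) - fderiv ℝ (lam j) x)) x := by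
    exact HasFDerivAt.finset_prod fun j _ =>
      (hasFDerivAt_const t x).sub (hdiff j x hx).hasFDerivAt
  have hGsimp : (∑ j, (∏ m ∈ univ.erase j, (t - lam m x)) • ((0 : E →L[ℝ] ℝ) - fderiv ℝ (lam j) x))
      = -(c • fderiv ℝ (lam i) x) := by
    rw [Finset.sum_eq_single i]
    · rw [← hc]; simp
    · intro j _ hji
      have h0 : ∏ m ∈ univ.erase j, (t - lam m x) = 0 := by
        refine Finset.prod_eq_zero (Finset.mem_erase.mpr ⟨Ne.symm hji, Finset.mem_univ i⟩) ?_
        rw [← ht, sub_self]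
      rw [h0, zero_smul]
    · intro h; exact absurd (Finset.mem_univ i) h
  -- φ is constant on U
  set φ : E → ℝ := fun y => (∏ j, (t - lam j y)) + (-1 : ℝ) ^ (n + 1) * ∏ j, lam j y with hφ
  have hφconst : ∀ y ∈ U, φ y = φ x := by
    intro y hy
    have key : ∀ z ∈ U, φ z = ∑ k ∈ range n, (-1 : ℝ) ^ k * t ^ (n - k) *
        ∑ S ∈ (univ : Finset (Fin n)).powersetCard k, ∏ j ∈ S, lam j z := by
      intro z hz
      rw [hφ]
      simp only
      rw [myexp n t (fun j => lam j z), Finset.sum_range_succ]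
      have hlast : (-1 : ℝ) ^ n * t ^ (n - n) *
          ∑ S ∈ (univ : Finset (Fin n)).powersetCard n, ∏ j ∈ S, lam j z
          = (-1 : ℝ) ^ n * ∏ j, lam j z := by
        rw [Nat.sub_self, pow_zero, mul_one]
        congr 1
        have hpc : (univ : Finset (Fin n)).powersetCard n = {univ} := by
          simpa using Finset.powersetCard_self (univ : Finset (Fin n))
        rw [hpc, Finset.sum_singleton]
      rw [hlast]
      have : (-1 : ℝ) ^ (n + 1) = -(-1 : ℝ) ^ n := by ring
      rw [this]
      ring
    rw [key y hy, key x hx]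
    refine Finset.sum_congr rfl fun k hk => ?_
    congr 1
    rcases Nat.eq_zero_or_pos k with hk0 | hk1
    · subst hk0; simp
    · exact (hconst k hk1 (by have := Finset.mem_range.mp hk; omega : k ≤ n - 1) y hy x hx)
  -- derivative of φ at x is 0
  have hφder : HasFDerivAt φ (-(c • fderiv ℝ (lam i) x) + ((-1 : ℝ) ^ (n + 1)) • Dσ) x := by
    rw [← hGsimp]
    exact hgder.add (hσ.const_mul _)
  have hφ0 : HasFDerivAt φ (0 : E →L[ℝ] ℝ) x := by
    have hev : φ =ᶠ[nhds x] fun _ => φ x := by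
      filter_upwards [hU.mem_nhds hx] with z hz using hφconst z hz
    exact (hasFDerivAt_const (φ x) x).congr_of_eventuallyEq hev
  have heq : -(c • fderiv ℝ (lam i) x) + ((-1 : ℝ) ^ (n + 1)) • Dσ = 0 :=
    hφder.unique hφ0
  have hsolve : c • fderiv ℝ (lam i) x = ((-1 : ℝ) ^ (n + 1)) • Dσ := by
    rw [neg_add_eq_sub, sub_eq_zero] at heq
    exact heq.symm
  rw [hfilter, ← hc]
  rw [div_eq_mul_inv, mul_comm, ← smul_smul]
  rw [← hsolve, smul_smul, inv_mul_cancel₀ hcne, one_smul]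
end

section
/- Let E be a real normed vector space, U ⊆ E an open set, n ≥ 2, and λ_1, …, λ_n : U → ℝ differentiable functions such that for every x ∈ U the values λ_1(x), …, λ_n(x) are pairwise distinct. Suppose that for each k ∈ {1, …, n} with k ≠ n−1 the function x ↦ e_k(λ_1(x), …, λ_n(x)) is constant on U, where e_k is the k-th elementary symmetric polynomial. Then for every i and every x ∈ U, the Fréchet derivative satisfies D(λ_i)(x) = ((−1)^n · λ_i(x) / ∏_{k≠i} (λ_i(x) − λ_k(x))) · D(σ_{n−1})(x), where σ_{n−1}(x) = e_{n−1}(λ_1(x), …, λ_n(x)). -/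
open Finset

private lemma sigma_deriv {E : Type*} [NormedAddCommGroup E] [NormedSpace ℝ E]
    (n : ℕ) (lam : Fin n → E → ℝ) (x : E)
    (hdiff : ∀ i, DifferentiableAt ℝ (lam i) x) (k : ℕ) :
    HasFDerivAt (fun y => ∑ s ∈ (univ : Finset (Fin n)).powersetCard (k+1), ∏ j ∈ s, lam j y)
      (∑ j, (∑ t ∈ ((univ : Finset (Fin n)).erase j).powersetCard k, ∏ m ∈ t, lam m x) •
        fderiv ℝ (lam j) x) x := by
  classical
  have h1 : ∀ s ∈ (univ : Finset (Fin n)).powersetCard (k+1),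
      HasFDerivAt (fun y => ∏ j ∈ s, lam j y)
        (∑ j ∈ s, (∏ m ∈ s.erase j, lam m x) • fderiv ℝ (lam j) x) x :=
    fun s _ => HasFDerivAt.finset_prod (fun j _ => (hdiff j).hasFDerivAt)
  have h2 := HasFDerivAt.fun_sum h1
  refine h2.congr_fderiv (Eq.symm ?_)
  rw [eq_comm]
  calc ∑ s ∈ (univ : Finset (Fin n)).powersetCard (k+1), ∑ j ∈ s,
          (∏ m ∈ s.erase j, lam m x) • fderiv ℝ (lam j) x
      = ∑ s ∈ (univ : Finset (Fin n)).powersetCard (k+1), ∑ j ∈ (univ : Finset (Fin n)),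
          if j ∈ s then (∏ m ∈ s.erase j, lam m x) • fderiv ℝ (lam j) x else 0 := by
        refine Finset.sum_congr rfl fun s _ => ?_
        rw [Finset.sum_ite_mem, Finset.univ_inter]
    _ = ∑ j ∈ (univ : Finset (Fin n)), ∑ s ∈ (univ : Finset (Fin n)).powersetCard (k+1),
          if j ∈ s then (∏ m ∈ s.erase j, lam m x) • fderiv ℝ (lam j) x else 0 :=
        Finset.sum_comm
    _ = ∑ j, (∑ t ∈ ((univ : Finset (Fin n)).erase j).powersetCard k, ∏ m ∈ t, lam m x) •
          fderiv ℝ (lam j) x := by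
        refine Finset.sum_congr rfl fun j _ => ?_
        rw [← Finset.sum_filter, ← Finset.sum_smul]
        congr 1
        refine Finset.sum_bij' (fun s _ => s.erase j) (fun t _ => insert j t) ?_ ?_ ?_ ?_ ?_
        · intro s hs
          simp only [Finset.mem_filter, Finset.mem_powersetCard] at hs ⊢
          constructor
          · exact fun m hm => Finset.mem_erase.2 ⟨(Finset.mem_erase.1 hm).1, Finset.mem_univ m⟩
          · rw [Finset.card_erase_of_mem hs.2, hs.1.2]; omega
        · intro t ht
          simp only [Finset.mem_powersetCard] at ht
          simp only [Finset.mem_filter, Finset.mem_powersetCard]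
          have hjt : j ∉ t := fun h => (Finset.mem_erase.1 (ht.1 h)).1 rfl
          exact ⟨⟨fun m _ => Finset.mem_univ m, by rw [Finset.card_insert_of_notMem hjt, ht.2]⟩,
            Finset.mem_insert_self j t⟩
        · intro s hs
          simp only [Finset.mem_filter] at hs
          exact Finset.insert_erase hs.2
        · intro t ht
          simp only [Finset.mem_powersetCard] at ht
          exact Finset.erase_insert (fun h => (Finset.mem_erase.1 (ht.1 h)).1 rfl)
        · intro s _; rfl

private lemma esymm_expand (n : ℕ) (hn : 1 ≤ n) (μ : Fin n → ℝ) (j : Fin n) (y : ℝ) :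
    ∑ k ∈ range n, ((-1:ℝ)^k * y ^ (n-1-k)) *
        (∑ t ∈ ((univ : Finset (Fin n)).erase j).powersetCard k, ∏ m ∈ t, μ m)
    = ∏ m ∈ (univ : Finset (Fin n)).erase j, (y - μ m) := by
  have hA : ((univ : Finset (Fin n)).erase j).card = n - 1 := by
    rw [Finset.card_erase_of_mem (Finset.mem_univ j), Finset.card_univ, Fintype.card_fin]
  have h := Finset.prod_add (fun m => -μ m) (fun _ => y) ((univ : Finset (Fin n)).erase j)
  simp only [neg_add_eq_sub] at h
  rw [h, Finset.sum_powerset, hA]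
  have h1 : n - 1 + 1 = n := by omega
  rw [h1]
  refine Finset.sum_congr rfl fun k hk => ?_
  rw [Finset.mul_sum]
  refine Finset.sum_congr rfl fun t ht => ?_
  rw [Finset.mem_powersetCard] at ht
  simp only [neg_eq_neg_one_mul (μ _)]
  rw [Finset.prod_mul_distrib, Finset.prod_const, Finset.prod_const,
    Finset.card_sdiff_of_subset ht.1, hA, ht.2]
  ring

/-- If `λ₁, …, λ_n : U → ℝ` are differentiable with pairwise distinct values, and the
elementary symmetric functions `e_k(λ₁, …, λ_n)` are constant on `U` for all
`k ∈ {1, …, n}` with `k ≠ n−1`, then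
`D(λ_i)(x) = ((−1)^n λ_i(x) / ∏_{k≠i}(λ_i(x) − λ_k(x))) · D(σ_{n−1})(x)`. -/
theorem stmt11 {E : Type*} [NormedAddCommGroup E] [NormedSpace ℝ E]
    (U : Set E) (hU : IsOpen U) (n : ℕ) (hn : 2 ≤ n)
    (lam : Fin n → E → ℝ)
    (hdiff : ∀ i, ∀ x ∈ U, DifferentiableAt ℝ (lam i) x)
    (hdist : ∀ x ∈ U, Function.Injective (fun i => lam i x))
    (hconst : ∀ k : ℕ, 1 ≤ k → k ≤ n → k ≠ n - 1 → ∀ x ∈ U, ∀ y ∈ U,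
      (∑ s ∈ Finset.univ.powersetCard k, ∏ j ∈ s, lam j x) =
      (∑ s ∈ Finset.univ.powersetCard k, ∏ j ∈ s, lam j y)) :
    ∀ i : Fin n, ∀ x ∈ U,
      fderiv ℝ (lam i) x =
        ((-1 : ℝ) ^ n * lam i x / ∏ k ∈ Finset.univ.filter (fun k => k ≠ i), (lam i x - lam k x)) •
          fderiv ℝ (fun y => ∑ s ∈ Finset.univ.powersetCard (n - 1), ∏ j ∈ s, lam j y) x := by
  intro i x hx
  classical
  have hdiff' : ∀ j, DifferentiableAt ℝ (lam j) x := fun j => hdiff j x hx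
  -- the product P ≠ 0
  have hfilter : (univ : Finset (Fin n)).filter (fun k => k ≠ i) = univ.erase i :=
    Finset.filter_ne' univ i
  set P : ℝ := ∏ m ∈ (univ : Finset (Fin n)).erase i, (lam i x - lam m x) with hPdef
  have hP : P ≠ 0 := by
    refine Finset.prod_ne_zero_iff.2 fun m hm => sub_ne_zero.2 fun h => ?_
    exact (Finset.mem_erase.1 hm).1 (hdist x hx h.symm)
  -- derivatives of constant sigma's vanish
  have hzero : ∀ k ∈ range n, k ≠ n - 2 →
      fderiv ℝ (fun y => ∑ s ∈ (univ : Finset (Fin n)).powersetCard (k+1), ∏ j ∈ s, lam j y) x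
        = 0 := by
    intro k hk hk2
    rw [Finset.mem_range] at hk
    have heq : (fun y => ∑ s ∈ (univ : Finset (Fin n)).powersetCard (k+1), ∏ j ∈ s, lam j y)
        =ᶠ[nhds x] fun _ => ∑ s ∈ (univ : Finset (Fin n)).powersetCard (k+1), ∏ j ∈ s, lam j x :=
      Filter.eventually_of_mem (hU.mem_nhds hx)
        (fun y hy => hconst (k+1) (by omega) (by omega) (by omega) y hy x hx)
    rw [heq.fderiv_eq, fderiv_fun_const]
    rfl
  -- main linear combination
  have hmain : ∑ k ∈ range n, ((-1:ℝ)^k * lam i x ^ (n-1-k)) •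
      fderiv ℝ (fun y => ∑ s ∈ (univ : Finset (Fin n)).powersetCard (k+1), ∏ j ∈ s, lam j y) x
      = P • fderiv ℝ (lam i) x := by
    calc ∑ k ∈ range n, ((-1:ℝ)^k * lam i x ^ (n-1-k)) •
          fderiv ℝ (fun y => ∑ s ∈ (univ : Finset (Fin n)).powersetCard (k+1), ∏ j ∈ s, lam j y) x
        = ∑ k ∈ range n, ∑ j, (((-1:ℝ)^k * lam i x ^ (n-1-k)) *
            (∑ t ∈ ((univ : Finset (Fin n)).erase j).powersetCard k, ∏ m ∈ t, lam m x)) •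
            fderiv ℝ (lam j) x := by
          refine Finset.sum_congr rfl fun k _ => ?_
          rw [(sigma_deriv n lam x hdiff' k).fderiv, Finset.smul_sum]
          simp [smul_smul]
      _ = ∑ j, (∑ k ∈ range n, ((-1:ℝ)^k * lam i x ^ (n-1-k)) *
            (∑ t ∈ ((univ : Finset (Fin n)).erase j).powersetCard k, ∏ m ∈ t, lam m x)) •
            fderiv ℝ (lam j) x := by
          rw [Finset.sum_comm]
          simp [Finset.sum_smul]
      _ = ∑ j, (∏ m ∈ (univ : Finset (Fin n)).erase j, (lam i x - lam m x)) •
            fderiv ℝ (lam j) x := by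
          refine Finset.sum_congr rfl fun j _ => ?_
          rw [esymm_expand n (by omega) (fun m => lam m x) j (lam i x)]
      _ = P • fderiv ℝ (lam i) x := by
          rw [← Finset.sum_subset (Finset.subset_univ {i})]
          · simp [hPdef]
          · intro j _ hj
            simp only [Finset.mem_singleton] at hj
            have hiz : i ∈ (univ : Finset (Fin n)).erase j :=
              Finset.mem_erase.2 ⟨fun h => hj h.symm, Finset.mem_univ i⟩
            rw [Finset.prod_eq_zero hiz (sub_self (lam i x)), zero_smul]
  -- only k = n-2 survives on the left
  have hsingle : ∑ k ∈ range n, ((-1:ℝ)^k * lam i x ^ (n-1-k)) •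
      fderiv ℝ (fun y => ∑ s ∈ (univ : Finset (Fin n)).powersetCard (k+1), ∏ j ∈ s, lam j y) x
      = ((-1:ℝ)^n * lam i x) •
        fderiv ℝ (fun y => ∑ s ∈ (univ : Finset (Fin n)).powersetCard (n-1), ∏ j ∈ s, lam j y) x := by
    rw [Finset.sum_eq_single (n-2)]
    · have h1 : n - 2 + 1 = n - 1 := by omega
      have h2 : n - 1 - (n - 2) = 1 := by omega
      have h3 : (-1:ℝ)^(n-2) = (-1:ℝ)^n := by
        conv_rhs => rw [show n = (n-2)+2 by omega]
        rw [pow_add]; norm_num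
      rw [h1, h2, h3, pow_one]
    · intro k hk hk2
      rw [hzero k hk hk2, smul_zero]
    · intro h
      exact absurd (Finset.mem_range.2 (by omega)) h
  rw [hsingle] at hmain
  have hgoal := congrArg (fun v => P⁻¹ • v) hmain.symm
  simp only [smul_smul, inv_mul_cancel₀ hP, one_smul] at hgoal
  rw [hgoal, hfilter, ← hPdef, div_eq_inv_mul]
end

section
/- Let m ≥ 2 and let λ_1, …, λ_m be distinct nonzero real numbers that are either all positive or all negative. Define P(x) = x·∏_{i=1}^m (x − λ_i), a polynomial of degree m+1 whose roots are 0, λ_1, …, λ_m. Then ∑ 1/(P'(λ_i)·P'(λ_j)) < 0, where the sum runs over all ordered pairs (i, j) with i ≠ j and i, j ∈ {1, …, m}. -/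
open Polynomial Finset

/-- Top coefficient of a Lagrange basis polynomial. -/
lemma coeff_basis_top {ι : Type*} [DecidableEq ι] (s : Finset ι) (v : ι → ℝ)
    (hv : Set.InjOn v s) {i : ι} (hi : i ∈ s) :
    (Lagrange.basis s v i).coeff (#s - 1) = (∏ j ∈ s.erase i, (v i - v j))⁻¹ := by
  rw [← Lagrange.natDegree_basis hv hi, ← leadingCoeff, Lagrange.basis, leadingCoeff_prod,
      ← Finset.prod_inv_distrib]
  refine Finset.prod_congr rfl fun j hj => ?_
  rw [Lagrange.basisDivisor, leadingCoeff_mul, leadingCoeff_C,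
      (monic_X_sub_C (v j)).leadingCoeff, mul_one]

/-- Key identity: for ≥ 2 distinct nodes, `∑ 1/∏_{j≠i}(v i − v j) = 0`. -/
lemma sum_inv_prod_sub {ι : Type*} [Fintype ι] [DecidableEq ι] (v : ι → ℝ)
    (hv : Function.Injective v) (h2 : 2 ≤ Fintype.card ι) :
    ∑ i, (∏ j ∈ Finset.univ.erase i, (v i - v j))⁻¹ = 0 := by
  have hvs : Set.InjOn v (univ : Finset ι) := fun a _ b _ h => hv h
  have hne : (univ : Finset ι).Nonempty := by
    rw [← Finset.card_pos, Finset.card_univ]; omega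
  have hsum := Lagrange.sum_basis hvs hne
  have h := congrArg (fun p : ℝ[X] => p.coeff (#(univ : Finset ι) - 1)) hsum
  simp only [finset_sum_coeff] at h
  have hc : #(univ : Finset ι) - 1 ≠ 0 := by
    rw [Finset.card_univ]; omega
  rw [coeff_one, if_neg hc] at h
  rw [← h]
  exact Finset.sum_congr rfl fun i _ => (coeff_basis_top univ v hvs (mem_univ i)).symm

/-- For `m ≥ 2` distinct nonzero reals `λ₁, …, λ_m`, all of the same sign, and
`P(x) = x ∏ (x − λ_i)`, the sum `∑_{i ≠ j} 1/(P'(λ_i) P'(λ_j))` over ordered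
pairs is negative. -/
theorem stmt12 (m : ℕ) (hm : 2 ≤ m) (lam : Fin m → ℝ) (hlam : Function.Injective lam)
    (hsign : (∀ i, 0 < lam i) ∨ (∀ i, lam i < 0))
    (P : Polynomial ℝ) (hP : P = X * ∏ i, (X - C (lam i))) :
    ∑ i, ∑ j ∈ Finset.univ.filter (fun j => j ≠ i),
        1 / (P.derivative.eval (lam i) * P.derivative.eval (lam j)) < 0 := by
  have hl0 : ∀ i, lam i ≠ 0 := by
    rcases hsign with h | h
    · exact fun i => ne_of_gt (h i)
    · exact fun i => ne_of_lt (h i)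
  obtain ⟨Q, hQ⟩ : ∃ Q : ℝ[X], Q = ∏ i, (X - C (lam i)) := ⟨_, rfl⟩
  obtain ⟨A, hAdef⟩ : ∃ A : ℝ, A = ∏ i, (0 - lam i) := ⟨_, rfl⟩
  obtain ⟨B, hBi⟩ : ∃ B : Fin m → ℝ,
      ∀ i, B i = lam i * ∏ j ∈ Finset.univ.erase i, (lam i - lam j) := ⟨_, fun _ => rfl⟩
  -- evaluations of P'
  have hPd : P.derivative = Q + X * Q.derivative := by
    rw [hP, ← hQ, derivative_mul, derivative_X, one_mul]
  have hA : P.derivative.eval 0 = A := by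
    simp [hPd, hQ, hAdef, eval_prod]
  have hQi : ∀ i, Q.eval (lam i) = 0 := by
    intro i
    rw [hQ, eval_prod]
    exact Finset.prod_eq_zero (mem_univ i) (by simp)
  have hQd : ∀ i, Q.derivative.eval (lam i) = ∏ j ∈ Finset.univ.erase i, (lam i - lam j) := by
    intro i
    have : Q = Lagrange.nodal univ lam := by rw [hQ, Lagrange.nodal_eq]
    rw [this, Lagrange.eval_nodal_derivative_eval_node_eq (mem_univ i), Lagrange.eval_nodal]
  have hB : ∀ i, P.derivative.eval (lam i) = B i := by
    intro i
    rw [hPd, eval_add, eval_mul, eval_X, hQi i, hQd i, zero_add, hBi i]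
  have hAne : A ≠ 0 := by
    rw [hAdef]
    exact Finset.prod_ne_zero_iff.mpr fun i _ => sub_ne_zero.mpr (Ne.symm (hl0 i))
  have hBne : ∀ i, B i ≠ 0 := by
    intro i
    rw [hBi i]
    refine mul_ne_zero (hl0 i) (Finset.prod_ne_zero_iff.mpr fun j hj => ?_)
    exact sub_ne_zero.mpr fun h => (Finset.mem_erase.mp hj).1 (hlam h.symm)
  -- the key identity via the extended node set including 0
  obtain ⟨v, hv⟩ : ∃ v : Fin (m + 1) → ℝ, v = Fin.cons 0 lam := ⟨_, rfl⟩
  have hv0 : v 0 = 0 := by rw [hv]; rfl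
  have hvs : ∀ i : Fin m, v i.succ = lam i := by intro i; rw [hv, Fin.cons_succ]
  have hvinj : Function.Injective v := by
    rw [hv, Fin.cons_injective_iff]
    exact ⟨by rintro ⟨i, hi⟩; exact hl0 i hi, hlam⟩
  have key := sum_inv_prod_sub v hvinj (by simp only [Fintype.card_fin]; omega)
  have emb : Fin m ↪ Fin (m+1) := ⟨Fin.succ, Fin.succ_injective m⟩
  have hW0 : (∏ j ∈ (Finset.univ : Finset (Fin (m+1))).erase 0, (v 0 - v j)) = A := by
    have hset : ((Finset.univ : Finset (Fin (m+1))).erase 0)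
        = Finset.univ.map ⟨Fin.succ, Fin.succ_injective m⟩ := by
      ext x
      cases x using Fin.cases with
      | zero => simp [(Fin.succ_ne_zero · |>.symm)]
      | succ y => simp [Fin.succ_ne_zero]
    rw [hset, Finset.prod_map, hAdef]
    refine Finset.prod_congr rfl fun j _ => ?_
    simp only [Function.Embedding.coeFn_mk]
    rw [hv0, hvs]
  have hWs : ∀ i : Fin m,
      (∏ j ∈ (Finset.univ : Finset (Fin (m+1))).erase i.succ, (v i.succ - v j)) = B i := by
    intro i
    have hset : ((Finset.univ : Finset (Fin (m+1))).erase i.succ)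
        = insert 0 (((Finset.univ : Finset (Fin m)).erase i).map
            ⟨Fin.succ, Fin.succ_injective m⟩) := by
      ext x
      cases x using Fin.cases with
      | zero => simp [Ne.symm (Fin.succ_ne_zero i)]
      | succ y => simp [Fin.succ_ne_zero, Fin.succ_inj]
    rw [hset, Finset.prod_insert (by simp [Fin.succ_ne_zero]), Finset.prod_map, hBi i,
        hv0, hvs i, sub_zero]
    refine congrArg _ (Finset.prod_congr rfl fun j _ => ?_)
    simp only [Function.Embedding.coeFn_mk]
    rw [hvs]
  rw [Fin.sum_univ_succ, hW0] at key
  have hsumB : ∑ i, (B i)⁻¹ = -A⁻¹ := by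
    have : ∑ i, (B i)⁻¹
        = ∑ i : Fin m, (∏ j ∈ (Finset.univ : Finset (Fin (m+1))).erase i.succ,
            (v i.succ - v j))⁻¹ :=
      Finset.sum_congr rfl fun i _ => by rw [hWs i]
    rw [this]; linarith
  -- rewrite the target as (∑ a)² − ∑ a²
  obtain ⟨a, hai⟩ : ∃ a : Fin m → ℝ, ∀ i, a i = (B i)⁻¹ := ⟨_, fun _ => rfl⟩
  have hsuma : ∑ i, a i = -A⁻¹ := by
    rw [Finset.sum_congr rfl fun i _ => hai i]; exact hsumB
  have htarget : ∑ i, ∑ j ∈ Finset.univ.filter (fun j => j ≠ i),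
      1 / (P.derivative.eval (lam i) * P.derivative.eval (lam j))
      = (∑ i, a i) ^ 2 - ∑ i, (a i) ^ 2 := by
    have h1 : ∀ i j : Fin m, 1 / (P.derivative.eval (lam i) * P.derivative.eval (lam j))
        = a i * a j := by
      intro i j; rw [hB i, hB j, one_div, mul_inv, hai i, hai j]
    calc ∑ i, ∑ j ∈ Finset.univ.filter (fun j => j ≠ i),
          1 / (P.derivative.eval (lam i) * P.derivative.eval (lam j))
        = ∑ i, ∑ j ∈ Finset.univ.erase i, a i * a j := by
          refine Finset.sum_congr rfl fun i _ => ?_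
          rw [Finset.filter_ne']
          exact Finset.sum_congr rfl fun j _ => h1 i j
      _ = ∑ i, ((∑ j, a i * a j) - a i * a i) := by
          refine Finset.sum_congr rfl fun i _ => ?_
          rw [Finset.sum_erase_eq_sub (mem_univ i)]
      _ = (∑ i, a i) ^ 2 - ∑ i, (a i) ^ 2 := by
          rw [Finset.sum_sub_distrib, ← Finset.sum_mul_sum, sq]
          congr 1
          exact Finset.sum_congr rfl fun i _ => (sq (a i)).symm
  rw [htarget, hsuma]
  -- find index of minimal |lam|
  obtain ⟨i0, -, hi0⟩ := Finset.exists_min_image (univ : Finset (Fin m))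
    (fun i => |lam i|) ⟨⟨0, by omega⟩, mem_univ _⟩
  have hero : ((univ : Finset (Fin m)).erase i0).Nonempty := by
    rw [← Finset.card_pos, Finset.card_erase_of_mem (mem_univ i0), Finset.card_univ,
        Fintype.card_fin]
    omega
  have hlt : ∀ j ∈ (univ : Finset (Fin m)).erase i0, |lam i0 - lam j| < |lam j| := by
    intro j hj
    have hle : |lam i0| ≤ |lam j| := hi0 j (mem_univ j)
    rcases hsign with h | h
    · rw [abs_of_pos (h i0), abs_of_pos (h j)] at hle
      rw [abs_of_pos (h j), abs_sub_lt_iff]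
      constructor <;> linarith [h i0, h j]
    · rw [abs_of_neg (h i0), abs_of_neg (h j)] at hle
      rw [abs_of_neg (h j), abs_sub_lt_iff]
      constructor <;> linarith [h i0, h j]
  have hBA : |B i0| < |A| := by
    have hprod : ∏ j ∈ Finset.univ.erase i0, |lam i0 - lam j|
        < ∏ j ∈ Finset.univ.erase i0, |lam j| := by
      refine Finset.prod_lt_prod_of_nonempty (fun j hj => ?_) hlt hero
      refine abs_pos.mpr (sub_ne_zero.mpr fun h => ?_)
      exact (Finset.mem_erase.mp hj).1 (hlam h.symm)
    have hAabs : |A| = |lam i0| * ∏ j ∈ Finset.univ.erase i0, |lam j| := by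
      rw [hAdef, Finset.abs_prod]
      rw [← Finset.mul_prod_erase _ _ (mem_univ i0)]
      simp [abs_sub_comm]
    rw [hBi i0, abs_mul, Finset.abs_prod, hAabs]
    exact mul_lt_mul_of_pos_left hprod (abs_pos.mpr (hl0 i0))
  have hsq : A⁻¹ ^ 2 < (a i0) ^ 2 := by
    have h1 : (B i0) ^ 2 < A ^ 2 := by
      rw [← sq_abs (B i0), ← sq_abs A]
      nlinarith [abs_nonneg (B i0), abs_nonneg A]
    have h2 : 0 < (B i0) ^ 2 := by
      rw [← sq_abs]; exact pow_pos (abs_pos.mpr (hBne i0)) 2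
    rw [hai i0, inv_pow, inv_pow]
    exact inv_strictAnti₀ h2 h1
  have hle : (a i0) ^ 2 ≤ ∑ i, (a i) ^ 2 :=
    Finset.single_le_sum (fun i _ => sq_nonneg (a i)) (mem_univ i0)
  have hnn : (-A⁻¹) ^ 2 = A⁻¹ ^ 2 := by ring
  rw [hnn]
  linarith
end

section
/- Let Q be a monic real polynomial of degree n ≥ 3 whose derivative Q' has n−1 distinct real roots ξ_1 < … < ξ_{n−1} (so Q''(ξ_i) ≠ 0 for each i). Define M̲ = min{ Q(ξ_i) : Q''(ξ_i) < 0 } and m̄ = max{ Q(ξ_i) : Q''(ξ_i) > 0 }. If t is a real number such that Q + t has n real roots counted with multiplicity, then −M̲ ≤ t ≤ −m̄. -/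
open Polynomial Finset

section Helpers
open Set Filter Topology

/-- If `g x = 0` and `g' x > 0`, then `g` is positive somewhere in `(x, y)`. -/
private lemma aux_right (g : Polynomial ℝ) {x y : ℝ} (hx : g.eval x = 0)
    (hc : 0 < g.derivative.eval x) (hxy : x < y) :
    ∃ w ∈ Set.Ioo x y, 0 < g.eval w := by
  have H : Tendsto (slope (fun w => g.eval w) x) (𝓝[>] x) (𝓝 (g.derivative.eval x)) :=
    (hasDerivAt_iff_tendsto_slope.1 (g.hasDerivAt x)).mono_left
      (nhdsWithin_mono x fun w hw => ne_of_gt hw)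
  have h1 : ∀ᶠ w in 𝓝[>] x, 0 < slope (fun w => g.eval w) x w := H.eventually_const_lt hc
  have h2 : ∀ᶠ w in 𝓝[>] x, w ∈ Set.Ioo x y :=
    Filter.eventually_of_mem (Ioo_mem_nhdsGT hxy) fun w hw => hw
  obtain ⟨w, hw1, hw2⟩ := (h1.and h2).exists
  refine ⟨w, hw2, ?_⟩
  have hs : slope (fun w => g.eval w) x w = g.eval w / (w - x) := by
    simp [slope_def_field, hx]
  rw [hs] at hw1
  have hwx : 0 < w - x := sub_pos.2 hw2.1
  have := mul_pos hw1 hwx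
  rwa [div_mul_cancel₀ _ (ne_of_gt hwx)] at this

/-- If `g x = 0` and `g' x > 0`, then `g` is negative somewhere in `(a, x)`. -/
private lemma aux_left (g : Polynomial ℝ) {a x : ℝ} (hx : g.eval x = 0)
    (hc : 0 < g.derivative.eval x) (hax : a < x) :
    ∃ w ∈ Set.Ioo a x, g.eval w < 0 := by
  have H : Tendsto (slope (fun w => g.eval w) x) (𝓝[<] x) (𝓝 (g.derivative.eval x)) :=
    (hasDerivAt_iff_tendsto_slope.1 (g.hasDerivAt x)).mono_left
      (nhdsWithin_mono x fun w hw => ne_of_lt hw)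
  have h1 : ∀ᶠ w in 𝓝[<] x, 0 < slope (fun w => g.eval w) x w := H.eventually_const_lt hc
  have h2 : ∀ᶠ w in 𝓝[<] x, w ∈ Set.Ioo a x :=
    Filter.eventually_of_mem (Ioo_mem_nhdsLT hax) fun w hw => hw
  obtain ⟨w, hw1, hw2⟩ := (h1.and h2).exists
  refine ⟨w, hw2, ?_⟩
  have hs : slope (fun w => g.eval w) x w = g.eval w / (w - x) := by
    simp [slope_def_field, hx]
  rw [hs] at hw1
  have hwx : w - x < 0 := sub_neg.2 hw2.2
  rcases div_pos_iff.1 hw1 with ⟨_, h⟩ | ⟨h, _⟩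
  · linarith
  · exact h

/-- If `g x = 0`, `g' x > 0`, and `g v < 0` for some `v > x`, then `g` has a root in `(x, v]`. -/
private lemma exists_root_right (g : Polynomial ℝ) {x v : ℝ} (hxv : x < v) (hx : g.eval x = 0)
    (hc : 0 < g.derivative.eval x) (hv : g.eval v < 0) :
    ∃ z, g.eval z = 0 ∧ x < z ∧ z ≤ v := by
  obtain ⟨w, hw, hwpos⟩ := aux_right g hx hc hxv
  have hwv : w ≤ v := le_of_lt hw.2
  have h0 : (0:ℝ) ∈ Set.Icc (g.eval v) (g.eval w) := ⟨le_of_lt hv, le_of_lt hwpos⟩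
  obtain ⟨z, hz, hz0⟩ := intermediate_value_Icc' hwv g.continuousOn h0
  exact ⟨z, hz0, lt_of_lt_of_le hw.1 hz.1, hz.2⟩

/-- Between two roots of `g` at both of which `g'` is positive, there is another root. -/
private lemma alt_aux (g : Polynomial ℝ) {a b : ℝ} (hab : a < b) (ha : g.eval a = 0)
    (hb : g.eval b = 0) (ha' : 0 < g.derivative.eval a) (hb' : 0 < g.derivative.eval b) :
    ∃ z, g.eval z = 0 ∧ a < z ∧ z < b := by
  obtain ⟨v, hv, hvneg⟩ := aux_left g hb hb' hab
  obtain ⟨z, hz0, hz1, hz2⟩ := exists_root_right g hv.1 ha ha' hvneg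
  exact ⟨z, hz0, hz1, lt_of_le_of_lt hz2 hv.2⟩

end Helpers

/-- Let `Q` be a monic real polynomial of degree `n ≥ 3` whose derivative has
`n−1` distinct real roots `ξ₁ < … < ξ_{n−1}`. With `M̲` the smallest local maximum
value `min{Q(ξ_i) : Q''(ξ_i) < 0}` and `m̄` the largest local minimum value
`max{Q(ξ_i) : Q''(ξ_i) > 0}`, if `Q + t` has `n` real roots counted with
multiplicity then `−M̲ ≤ t ≤ −m̄`. -/
theorem stmt17 (n : ℕ) (hn : 3 ≤ n) (Q : Polynomial ℝ) (hmonic : Q.Monic)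
    (hdeg : Q.natDegree = n)
    (xi : Fin (n - 1) → ℝ) (hmono : StrictMono xi)
    (hcrit : ∀ x : ℝ, Q.derivative.eval x = 0 ↔ ∃ i, x = xi i)
    (t : ℝ) (hsplit : (Q + C t).roots.card = n) :
    -sInf {y : ℝ | ∃ i, Q.derivative.derivative.eval (xi i) < 0 ∧ y = Q.eval (xi i)} ≤ t ∧
    t ≤ -sSup {y : ℝ | ∃ i, 0 < Q.derivative.derivative.eval (xi i) ∧ y = Q.eval (xi i)} := by
  classical
  set P : Polynomial ℝ := Q + C t with hP
  have hPdeg : P.natDegree = n := by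
    rw [hP, natDegree_add_C, hdeg]
  have hP0 : P ≠ 0 := by
    intro h
    rw [h, natDegree_zero] at hPdeg
    omega
  have hPd : P.derivative = Q.derivative := by
    rw [hP, derivative_add, derivative_C, add_zero]
  have hPev : ∀ x : ℝ, P.eval x = Q.eval x + t := by
    intro x; rw [hP, eval_add, eval_C]
  -- Q' is nonzero
  have hQ'0 : Q.derivative ≠ 0 := by
    intro h
    have h2 := Polynomial.eq_C_of_derivative_eq_zero h
    rw [h2, natDegree_C] at hdeg
    omega
  -- each ξ i is a root of Q'
  have hxiroot : ∀ i, Q.derivative.IsRoot (xi i) := fun i => (hcrit _).2 ⟨i, rfl⟩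
  have hximem : ∀ i, xi i ∈ Q.derivative.roots := fun i =>
    (mem_roots hQ'0).2 (hxiroot i)
  have hcard' : Multiset.card Q.derivative.roots ≤ n - 1 :=
    (Q.derivative.card_roots').trans (by rw [← hdeg]; exact natDegree_derivative_le Q)
  have htf : Q.derivative.roots.toFinset = Finset.univ.image xi := by
    ext x
    simp only [Multiset.mem_toFinset, mem_roots hQ'0, Finset.mem_image, Finset.mem_univ,
      true_and]
    constructor
    · intro hx
      obtain ⟨i, hi⟩ := (hcrit x).1 hx
      exact ⟨i, hi.symm⟩
    · rintro ⟨i, rfl⟩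
      exact hxiroot i
  have hcardtf : (Finset.univ.image xi).card = n - 1 := by
    rw [Finset.card_image_of_injective _ hmono.injective, Finset.card_univ, Fintype.card_fin]
  -- roots of Q' are simple
  have hnodup : Q.derivative.roots.Nodup := by
    rw [Multiset.nodup_iff_count_le_one]
    intro x
    by_contra hx
    push_neg at hx
    have hxmem : x ∈ Q.derivative.roots.toFinset := by
      rw [Multiset.mem_toFinset, ← Multiset.count_pos]; omega
    have hsum : ∑ y ∈ Q.derivative.roots.toFinset, Q.derivative.roots.count y =
        Multiset.card Q.derivative.roots := Multiset.toFinset_sum_count_eq _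
    have hlt : Q.derivative.roots.toFinset.card < Multiset.card Q.derivative.roots := by
      rw [← hsum, Finset.card_eq_sum_ones]
      refine Finset.sum_lt_sum (fun y hy => ?_) ⟨x, hxmem, by omega⟩
      rw [Nat.one_le_iff_ne_zero, ← Nat.pos_iff_ne_zero, Multiset.count_pos]
      exact Multiset.mem_toFinset.1 hy
    rw [htf, hcardtf] at hlt
    omega
  have hmult1 : ∀ x : ℝ, Q.derivative.rootMultiplicity x ≤ 1 := by
    intro x
    rw [← count_roots]
    exact Multiset.nodup_iff_count_le_one.1 hnodup x
  -- Q'' does not vanish at the ξ i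
  have hQ''0 : Q.derivative.derivative ≠ 0 := by
    intro h
    have h2 := Polynomial.eq_C_of_derivative_eq_zero h
    apply hQ'0
    have := hxiroot ⟨0, by omega⟩
    rw [h2] at this ⊢
    rw [IsRoot, eval_C] at this
    rw [this, map_zero]
  have hQ''ne : ∀ i, Q.derivative.derivative.eval (xi i) ≠ 0 := by
    intro i h
    have hm : Q.derivative.rootMultiplicity (xi i) = 1 :=
      le_antisymm (hmult1 _) ((rootMultiplicity_pos hQ'0).2 (hxiroot i))
    have hd := Polynomial.derivative_rootMultiplicity_of_root (hxiroot i)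
    rw [hm] at hd
    have : 0 < Q.derivative.derivative.rootMultiplicity (xi i) :=
      (rootMultiplicity_pos hQ''0).2 h
    omega
  -- the key counting argument
  have key : ∀ i : Fin (n - 1),
      ¬((0 < P.eval (xi i) ∧ 0 < Q.derivative.derivative.eval (xi i)) ∨
        (P.eval (xi i) < 0 ∧ Q.derivative.derivative.eval (xi i) < 0)) := by
    intro i hi
    have hPxne : P.eval (xi i) ≠ 0 := by
      rcases hi with ⟨h, _⟩ | ⟨h, _⟩
      · exact ne_of_gt h
      · exact ne_of_lt h
    set T : Finset ℝ := (Finset.univ.image xi).erase (xi i) with hT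
    have hTmem : ∀ z : ℝ, Q.derivative.eval z = 0 → z ≠ xi i → z ∈ T := by
      intro z hz hzne
      obtain ⟨k, hk⟩ := (hcrit z).1 hz
      refine Finset.mem_erase.2 ⟨hzne, ?_⟩
      rw [hk]
      exact Finset.mem_image_of_mem _ (Finset.mem_univ k)
    have interleave : ∀ x ∈ P.roots.toFinset, ∀ y ∈ P.roots.toFinset, x < y →
        (∀ z ∈ P.roots.toFinset, z ∉ Set.Ioo x y) → ∃ z ∈ T, x < z ∧ z < y := by
      intro x hx y hy hxy _
      have hx0 : P.eval x = 0 := (mem_roots hP0).1 (Multiset.mem_toFinset.1 hx)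
      have hy0 : P.eval y = 0 := (mem_roots hP0).1 (Multiset.mem_toFinset.1 hy)
      by_cases hmem : xi i ∈ Set.Ioo x y
      · -- MVT on [ξ i, y], then find a second critical point
        have hiy : xi i < y := hmem.2
        obtain ⟨v, hv, hv'⟩ := exists_deriv_eq_slope (fun w => P.eval w) hiy
          P.continuousOn P.differentiable.differentiableOn
        rw [Polynomial.deriv, hPd] at hv'
        have hQv : Q.derivative.eval v = -P.eval (xi i) / (y - xi i) := by
          rw [hv', hy0, zero_sub]
        have hy' : 0 < y - xi i := sub_pos.2 hiy
        rcases hi with ⟨hp, hc⟩ | ⟨hp, hc⟩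
        · -- P(ξ i) > 0, Q''(ξ i) > 0 : Q'(v) < 0, root of Q' in (ξ i, v]
          have hQvneg : Q.derivative.eval v < 0 := by
            rw [hQv]
            exact div_neg_of_neg_of_pos (by linarith) hy'
          obtain ⟨z, hz0, hz1, hz2⟩ :=
            exists_root_right Q.derivative hv.1 (hxiroot i) hc hQvneg
          exact ⟨z, hTmem z hz0 (ne_of_gt hz1), lt_trans hmem.1 hz1,
            lt_of_le_of_lt hz2 hv.2⟩
        · -- P(ξ i) < 0, Q''(ξ i) < 0 : Q'(v) > 0, use -Q'
          have hQvpos : 0 < Q.derivative.eval v := by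
            rw [hQv]
            exact div_pos (by linarith) hy'
          obtain ⟨z, hz0, hz1, hz2⟩ :=
            exists_root_right (-Q.derivative) hv.1
              (by rw [eval_neg, hxiroot i, neg_zero])
              (by rw [derivative_neg, eval_neg]; linarith)
              (by rw [eval_neg]; linarith)
          rw [eval_neg, neg_eq_zero] at hz0
          exact ⟨z, hTmem z hz0 (ne_of_gt hz1), lt_trans hmem.1 hz1,
            lt_of_le_of_lt hz2 hv.2⟩
      · -- Rolle
        obtain ⟨z, hz, hz'⟩ := exists_deriv_eq_zero hxy P.continuousOn (hx0.trans hy0.symm)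
        rw [Polynomial.deriv, hPd] at hz'
        refine ⟨z, hTmem z hz' ?_, hz.1, hz.2⟩
        intro h
        exact hmem (h ▸ hz)
    have hs := Finset.card_le_diff_of_interleaved interleave
    have hmle : ∀ x ∈ P.roots.toFinset,
        P.roots.count x ≤ 1 + (if x ∈ T then 1 else 0) := by
      intro x hx
      have hsub := rootMultiplicity_sub_one_le_derivative_rootMultiplicity P x
      rw [hPd] at hsub
      have hm1 := hmult1 x
      rw [count_roots]
      by_cases hxT : x ∈ T
      · simp only [hxT, if_true]
        omega
      · simp only [hxT, if_false]
        by_contra h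
        push_neg at h
        have h2 : 0 < Q.derivative.rootMultiplicity x := by omega
        have hroot : Q.derivative.IsRoot x := (rootMultiplicity_pos hQ'0).1 h2
        have hxi : x = xi i := by
          by_contra hne
          exact hxT (hTmem x hroot hne)
        apply hPxne
        rw [← hxi]
        exact (mem_roots hP0).1 (Multiset.mem_toFinset.1 hx)
    have hcount : Multiset.card P.roots ≤
        P.roots.toFinset.card + (P.roots.toFinset ∩ T).card := by
      rw [← Multiset.toFinset_sum_count_eq]
      calc ∑ x ∈ P.roots.toFinset, P.roots.count x
          ≤ ∑ x ∈ P.roots.toFinset, (1 + if x ∈ T then 1 else 0) :=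
            Finset.sum_le_sum hmle
        _ = P.roots.toFinset.card + (P.roots.toFinset ∩ T).card := by
            rw [Finset.sum_add_distrib, Finset.sum_const, smul_eq_mul, mul_one]
            congr 1
            rw [← Finset.card_filter, Finset.filter_mem_eq_inter]
    have hTcard : T.card = n - 2 := by
      rw [hT, Finset.card_erase_of_mem (Finset.mem_image_of_mem _ (Finset.mem_univ i)),
        hcardtf]
      omega
    have hint : (T \ P.roots.toFinset).card + (T ∩ P.roots.toFinset).card = T.card :=
      Finset.card_sdiff_add_card_inter T _
    have hcomm : (P.roots.toFinset ∩ T).card = (T ∩ P.roots.toFinset).card := by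
      rw [Finset.inter_comm]
    omega
  -- sign claims
  have clA : ∀ i, Q.derivative.derivative.eval (xi i) < 0 → 0 ≤ P.eval (xi i) := by
    intro i hc
    by_contra h
    push_neg at h
    exact key i (Or.inr ⟨h, hc⟩)
  have clB : ∀ i, 0 < Q.derivative.derivative.eval (xi i) → P.eval (xi i) ≤ 0 := by
    intro i hc
    by_contra h
    push_neg at h
    exact key i (Or.inl ⟨h, hc⟩)
  -- alternation: among ξ₀ and ξ₁ there is one local max and one local min
  have hi0 : (0 : ℕ) < n - 1 := by omega
  have hi1 : (1 : ℕ) < n - 1 := by omega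
  set i0 : Fin (n - 1) := ⟨0, hi0⟩
  set i1 : Fin (n - 1) := ⟨1, hi1⟩
  have hlt01 : xi i0 < xi i1 := hmono (by simp [i0, i1, Fin.lt_def])
  have hnob : ∀ z : ℝ, Q.derivative.eval z = 0 → ¬(xi i0 < z ∧ z < xi i1) := by
    rintro z hz ⟨h1, h2⟩
    obtain ⟨k, rfl⟩ := (hcrit z).1 hz
    rw [hmono.lt_iff_lt] at h1 h2
    rw [Fin.lt_def] at h1 h2
    simp only [i0, i1] at h1 h2
    omega
  have hex : ∃ a b : Fin (n - 1), Q.derivative.derivative.eval (xi a) < 0 ∧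
      0 < Q.derivative.derivative.eval (xi b) := by
    rcases (hQ''ne i0).lt_or_gt with h0 | h0
    · rcases (hQ''ne i1).lt_or_gt with h1 | h1
      · -- both negative: apply alt_aux to -Q'
        exfalso
        obtain ⟨z, hz0, hz1, hz2⟩ := alt_aux (-Q.derivative) hlt01
          (by rw [eval_neg, hxiroot i0, neg_zero])
          (by rw [eval_neg, hxiroot i1, neg_zero])
          (by rw [derivative_neg, eval_neg]; linarith)
          (by rw [derivative_neg, eval_neg]; linarith)
        rw [eval_neg, neg_eq_zero] at hz0
        exact hnob z hz0 ⟨hz1, hz2⟩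
      · exact ⟨i0, i1, h0, h1⟩
    · rcases (hQ''ne i1).lt_or_gt with h1 | h1
      · exact ⟨i1, i0, h1, h0⟩
      · -- both positive: apply alt_aux to Q'
        exfalso
        obtain ⟨z, hz0, hz1, hz2⟩ := alt_aux Q.derivative hlt01
          (hxiroot i0) (hxiroot i1) h0 h1
        exact hnob z hz0 ⟨hz1, hz2⟩
  obtain ⟨a, b, ha, hb⟩ := hex
  -- conclude
  set Smax := {y : ℝ | ∃ i, Q.derivative.derivative.eval (xi i) < 0 ∧ y = Q.eval (xi i)}
    with hSmax
  set Smin := {y : ℝ | ∃ i, 0 < Q.derivative.derivative.eval (xi i) ∧ y = Q.eval (xi i)}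
    with hSmin
  have hSmaxne : Smax.Nonempty := ⟨Q.eval (xi a), a, ha, rfl⟩
  have hSminne : Smin.Nonempty := ⟨Q.eval (xi b), b, hb, rfl⟩
  constructor
  · rw [neg_le]
    refine le_csInf hSmaxne ?_
    rintro y ⟨i, hc, rfl⟩
    have := clA i hc
    rw [hPev] at this
    linarith
  · rw [le_neg]
    have hbdd : BddAbove Smin := by
      have hsub : Smin ⊆ Set.range fun i => Q.eval (xi i) := by
        rintro y ⟨i, _, rfl⟩
        exact ⟨i, rfl⟩
      exact ((Set.finite_range _).subset hsub).bddAbove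
    refine csSup_le hSminne ?_
    rintro y ⟨i, hc, rfl⟩
    have := clB i hc
    rw [hPev] at this
    linarith
end
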